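/- arXiv:2008.08011 — 5 statements merged into one kernel-verified Lean document; each statement's English description precedes it below -/
import Mathlib

section
/- (Constructive Implicit Function Theorem.) Let P, X, Y be Banach spaces and let G : P × X → Y be Fréchet differentiable. Assume: (H1) there exist (α*, x*) ∈ P × X and ρ > 0 with ‖G(α*, x*)‖_Y ≤ ρ; (H2) D_xG(α*, x*) has a bounded inverse with operator norm ‖D_xG(α*, x*)⁻¹‖ ≤ K for some K > 0; (H3) there exist positive constants L₁, L₂, ℓ_x, ℓ_α such that for all (α, x) with ‖x − x*‖_X ≤ ℓ_x and ‖α − α*‖_P ≤ ℓ_α one has ‖D_xG(α, x) − D_xG(α*, x*)‖ ≤ L₁‖x − x*‖_X + L₂‖α − α*‖_P; (H4) there exist positive constants L₃, L₄ such that for all α with ‖α − α*‖_P ≤ ℓ_α one has ‖D_αG(α, x*)‖ ≤ L₃ + L₄‖α − α*‖_P. If in addition 4K²ρL₁ < 1 and 2Kρ < ℓ_x, then there exists a pair of constants (δ_α, δ_x) with 0 ≤ δ_α ≤ ℓ_α and 0 < δ_x ≤ ℓ_x satisfying 2KL₁δ_x + 2KL₂δ_α ≤ 1 and 2Kρ +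 2KL₃δ_α + 2KL₄δ_α² ≤ δ_x, and for every such pair the following holds: for every α ∈ P with ‖α − α*‖_P ≤ δ_α there exists a uniquely determined x(α) ∈ X with ‖x(α) − x*‖_X ≤ δ_x such that G(α, x(α)) = 0; in particular, all solutions of G(α, x) = 0 in the set {‖α − α*‖_P ≤ δ_α} × {‖x − x*‖_X ≤ δ_x} lie on the graph of the map α ↦ x(α). -/
/-!
The solution is the fixed point of the simplified Newton map `x ↦ x - A⁻¹ G(α, x)`, where
`A = D_xG(α*, x*)` is frozen at the reference point. By the mean value inequality and (H3) this map
is Lipschitz on the ball `‖x - x*‖ ≤ δ_x` with constant `K (L₁δ_x + L₂δ_α) ≤ 1/2`, and by (H1), (H4)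
it moves `x*` by at most `K (ρ + L₃δ_α + L₄δ_α²) ≤ δ_x / 2`. Hence it maps the ball into itself, and
the Banach fixed point theorem gives existence and uniqueness of the zero in the ball.
-/

open Metric Function Set

theorem existsUnique_isFixedPt_mem_closedBall {E : Type*} [MetricSpace E] [CompleteSpace E]
    {T : E → E} {c : E} {r q : ℝ} (hq₀ : 0 ≤ q) (hq₁ : q < 1)
    (hT : ∀ x ∈ closedBall c r, ∀ y ∈ closedBall c r, dist (T x) (T y) ≤ q * dist x y)
    (hc : dist (T c) c ≤ (1 - q) * r) :
    ∃! x, x ∈ closedBall c r ∧ IsFixedPt T x := by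
  have hr : 0 ≤ r := by nlinarith [dist_nonneg (x := T c) (y := c)]
  have hc_mem : c ∈ closedBall c r := mem_closedBall_self hr
  have hmaps : MapsTo T (closedBall c r) (closedBall c r) := fun x hx => by
    have hxc : dist x c ≤ r := hx
    calc dist (T x) c ≤ dist (T x) (T c) + dist (T c) c := dist_triangle _ _ _
      _ ≤ q * r + (1 - q) * r := add_le_add ((hT x hx c hc_mem).trans (by gcongr)) hc
      _ = r := by ring
  have hcontr : ContractingWith q.toNNReal (hmaps.restrict T _ _) := by
    refine ⟨by simpa using hq₁, LipschitzWith.of_dist_le_mul fun x y => ?_⟩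
    rw [Real.coe_toNNReal q hq₀]
    exact hT x x.2 y y.2
  obtain ⟨x, hx, hfix, -⟩ :=
    hcontr.exists_fixedPoint' isClosed_closedBall.isComplete hmaps hc_mem (edist_ne_top _ _)
  refine ⟨x, ⟨hx, hfix⟩, fun y ⟨hy, hyfix⟩ => dist_le_zero.mp ?_⟩
  have := hT y hy x hx
  rw [hyfix, hfix] at this
  nlinarith [dist_nonneg (x := y) (y := x)]

section SimplifiedNewton

variable {X Y : Type*} [NormedAddCommGroup X] [NormedSpace ℝ X]
  [NormedAddCommGroup Y] [NormedSpace ℝ Y]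

def simplifiedNewtonMap (B : Y →L[ℝ] X) (F : X → Y) (x : X) : X := x - B (F x)

theorem isFixedPt_simplifiedNewtonMap_iff {B : Y →L[ℝ] X} (hB : Injective B) {F : X → Y}
    {x : X} : IsFixedPt (simplifiedNewtonMap B F) x ↔ F x = 0 := by
  rw [IsFixedPt, simplifiedNewtonMap, sub_eq_self, ← map_zero B, hB.eq_iff]

theorem norm_simplifiedNewtonMap_sub_le {A : X →L[ℝ] Y} {B : Y →L[ℝ] X}
    (hBA : B.comp A = .id ℝ X) {F : X → Y} {s : Set X} (hs : Convex ℝ s)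
    (hF : ∀ z ∈ s, DifferentiableAt ℝ F z) {M : ℝ} (hM : ∀ z ∈ s, ‖fderiv ℝ F z - A‖ ≤ M)
    {x y : X} (hx : x ∈ s) (hy : y ∈ s) :
    ‖simplifiedNewtonMap B F x - simplifiedNewtonMap B F y‖ ≤ ‖B‖ * M * ‖x - y‖ := by
  have hBA' : B (A (x - y)) = x - y := congr($hBA (x - y))
  have hsub : simplifiedNewtonMap B F x - simplifiedNewtonMap B F y
      = -B (F x - F y - A (x - y)) := by
    simp only [simplifiedNewtonMap, map_sub B, hBA']
    abel
  calc ‖simplifiedNewtonMap B F x - simplifiedNewtonMap B F y‖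
      ≤ ‖B‖ * ‖F x - F y - A (x - y)‖ := by rw [hsub, norm_neg]; exact B.le_opNorm _
    _ ≤ ‖B‖ * (M * ‖x - y‖) := by gcongr; exact hs.norm_image_sub_le_of_norm_fderiv_le' hF hM hy hx
    _ = ‖B‖ * M * ‖x - y‖ := by ring

theorem existsUnique_zero_mem_closedBall [CompleteSpace X] {F : X → Y}
    (hF : Differentiable ℝ F) {A : X →L[ℝ] Y} {B : Y →L[ℝ] X} (hBA : B.comp A = .id ℝ X)
    (hAB : A.comp B = .id ℝ Y) {c : X} {r M q : ℝ}
    (hM : ∀ z ∈ closedBall c r, ‖fderiv ℝ F z - A‖ ≤ M) (hq₁ : q < 1) (hBM : ‖B‖ * M ≤ q)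
    (hc : ‖B‖ * ‖F c‖ ≤ (1 - q) * r) :
    ∃! x, x ∈ closedBall c r ∧ F x = 0 := by
  have hB : Injective B := LeftInverse.injective fun y => congr($hAB y)
  have hr : 0 ≤ r := by nlinarith [norm_nonneg B, norm_nonneg (F c)]
  have hM₀ : 0 ≤ M := (norm_nonneg _).trans (hM c (mem_closedBall_self hr))
  have hT : ∀ x ∈ closedBall c r, ∀ y ∈ closedBall c r,
      dist (simplifiedNewtonMap B F x) (simplifiedNewtonMap B F y) ≤ q * dist x y := by
    intro x hx y hy
    simp only [dist_eq_norm]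
    exact (norm_simplifiedNewtonMap_sub_le hBA (convex_closedBall c r) (fun z _ => hF z) hM hx
      hy).trans (by gcongr)
  have hTc : dist (simplifiedNewtonMap B F c) c ≤ (1 - q) * r := by
    rw [dist_eq_norm, simplifiedNewtonMap, sub_sub_cancel_left, norm_neg]
    exact (B.le_opNorm _).trans hc
  simpa only [isFixedPt_simplifiedNewtonMap_iff hB] using
    existsUnique_isFixedPt_mem_closedBall (hBM.trans' (by positivity)) hq₁ hT hTc

end SimplifiedNewton

theorem constructive_implicit_function_theorem_general
    {P X Y : Type*}
    [NormedAddCommGroup P] [NormedSpace ℝ P]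
    [NormedAddCommGroup X] [NormedSpace ℝ X] [CompleteSpace X]
    [NormedAddCommGroup Y] [NormedSpace ℝ Y]
    (G : P × X → Y) (hG : Differentiable ℝ G)
    (αs : P) (xs : X) (ρ K L₁ L₂ L₃ L₄ ℓx ℓα : ℝ)
    (hρ : 0 < ρ) (hK : 0 < K)
    (hL₁ : 0 < L₁) (hL₂ : 0 < L₂) (hL₃ : 0 < L₃) (hL₄ : 0 < L₄)
    (hℓα : 0 ≤ ℓα)
    (H1 : ‖G (αs, xs)‖ ≤ ρ)
    (H2 : ∃ Ainv : Y →L[ℝ] X,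
        Ainv.comp (fderiv ℝ (fun x => G (αs, x)) xs) = ContinuousLinearMap.id ℝ X ∧
        (fderiv ℝ (fun x => G (αs, x)) xs).comp Ainv = ContinuousLinearMap.id ℝ Y ∧
        ‖Ainv‖ ≤ K)
    (H3 : ∀ (α : P) (x : X), ‖x - xs‖ ≤ ℓx → ‖α - αs‖ ≤ ℓα →
        ‖fderiv ℝ (fun x' => G (α, x')) x - fderiv ℝ (fun x' => G (αs, x')) xs‖
          ≤ L₁ * ‖x - xs‖ + L₂ * ‖α - αs‖)
    (H4 : ∀ α : P, ‖α - αs‖ ≤ ℓα →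
        ‖fderiv ℝ (fun α' => G (α', xs)) α‖ ≤ L₃ + L₄ * ‖α - αs‖)
    (hmain1 : 4 * K ^ 2 * ρ * L₁ < 1) (hmain2 : 2 * K * ρ < ℓx) :
    (∃ δα δx : ℝ, 0 ≤ δα ∧ δα ≤ ℓα ∧ 0 < δx ∧ δx ≤ ℓx ∧
        2 * K * L₁ * δx + 2 * K * L₂ * δα ≤ 1 ∧
        2 * K * ρ + 2 * K * L₃ * δα + 2 * K * L₄ * δα ^ 2 ≤ δx) ∧
    (∀ δα δx : ℝ, 0 ≤ δα → δα ≤ ℓα → 0 < δx → δx ≤ ℓx →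
        2 * K * L₁ * δx + 2 * K * L₂ * δα ≤ 1 →
        2 * K * ρ + 2 * K * L₃ * δα + 2 * K * L₄ * δα ^ 2 ≤ δx →
        ∀ α : P, ‖α - αs‖ ≤ δα →
          ∃! x : X, ‖x - xs‖ ≤ δx ∧ G (α, x) = 0) := by
  obtain ⟨B, hBA, hAB, hBK⟩ := H2
  refine ⟨⟨0, 2 * K * ρ, le_rfl, hℓα, by positivity, hmain2.le, by nlinarith, by nlinarith⟩, ?_⟩
  intro δα δx hδα hδαℓ hδx hδxℓ hsmall hres α hα
  have hM : ∀ x ∈ closedBall xs δx, ‖fderiv ℝ (fun x' => G (α, x')) x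
      - fderiv ℝ (fun x' => G (αs, x')) xs‖ ≤ L₁ * δx + L₂ * δα := fun x hx => by
    rw [mem_closedBall_iff_norm] at hx
    exact (H3 α x (hx.trans hδxℓ) (hα.trans hδαℓ)).trans (by gcongr)
  have hGα : ‖G (α, xs)‖ ≤ ρ + (L₃ + L₄ * δα) * δα := by
    have hderiv : ∀ β ∈ closedBall αs δα, ‖fderiv ℝ (fun α' => G (α', xs)) β‖ ≤ L₃ + L₄ * δα :=
      fun β hβ => by
        rw [mem_closedBall_iff_norm] at hβ
        exact (H4 β (hβ.trans hδαℓ)).trans (by gcongr)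
    have hmvt := (convex_closedBall αs δα).norm_image_sub_le_of_norm_fderiv_le
      (fun β _ => by fun_prop) hderiv (mem_closedBall_self hδα) (mem_closedBall_iff_norm.2 hα)
    calc ‖G (α, xs)‖ ≤ ‖G (α, xs) - G (αs, xs)‖ + ‖G (αs, xs)‖ := norm_le_norm_sub_add _ _
      _ ≤ (L₃ + L₄ * δα) * δα + ρ := add_le_add (hmvt.trans (by gcongr)) H1
      _ = ρ + (L₃ + L₄ * δα) * δα := add_comm _ _
  have hBM : ‖B‖ * (L₁ * δx + L₂ * δα) ≤ 1 / 2 := by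
    nlinarith [mul_le_mul_of_nonneg_right hBK (by positivity : 0 ≤ L₁ * δx + L₂ * δα)]
  have hBres : ‖B‖ * ‖G (α, xs)‖ ≤ (1 - 1 / 2) * δx := by
    nlinarith [mul_le_mul hBK hGα (norm_nonneg _) hK.le]
  simpa only [mem_closedBall_iff_norm] using
    existsUnique_zero_mem_closedBall (by fun_prop) hBA hAB hM (by norm_num) hBM hBres

/-- Constructive Implicit Function Theorem: given Banach spaces
`P, X, Y`, a Fréchet differentiable `G : P × X → Y`, an approximate zero
`(α*, x*)` with residual bound `ρ` (H1), a bounded inverse of the partial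
derivative `D_x G(α*,x*)` of norm at most `K` (H2), Lipschitz bounds (H3) for
`D_x G` and (H4) for `D_α G`, and the smallness conditions `4K²ρL₁ < 1` and
`2Kρ < ℓ_x`, there exists a pair `(δ_α, δ_x)` with `0 ≤ δ_α ≤ ℓ_α`,
`0 < δ_x ≤ ℓ_x`, `2KL₁δ_x + 2KL₂δ_α ≤ 1` and
`2Kρ + 2KL₃δ_α + 2KL₄δ_α² ≤ δ_x`, and for every such pair and every `α` with
`‖α - α*‖ ≤ δ_α` there is a unique `x(α)` with `‖x(α) - x*‖ ≤ δ_x` and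
`G(α, x(α)) = 0` (so all solutions in the box lie on the graph `α ↦ x(α)`). -/
theorem constructive_implicit_function_theorem
    {P X Y : Type*}
    [NormedAddCommGroup P] [NormedSpace ℝ P] [CompleteSpace P]
    [NormedAddCommGroup X] [NormedSpace ℝ X] [CompleteSpace X]
    [NormedAddCommGroup Y] [NormedSpace ℝ Y] [CompleteSpace Y]
    (G : P × X → Y) (hG : Differentiable ℝ G)
    (αs : P) (xs : X) (ρ K L₁ L₂ L₃ L₄ ℓx ℓα : ℝ)
    (hρ : 0 < ρ) (hK : 0 < K)
    (hL₁ : 0 < L₁) (hL₂ : 0 < L₂) (hL₃ : 0 < L₃) (hL₄ : 0 < L₄)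
    (hℓx : 0 < ℓx) (hℓα : 0 ≤ ℓα)
    (H1 : ‖G (αs, xs)‖ ≤ ρ)
    (H2 : ∃ Ainv : Y →L[ℝ] X,
        Ainv.comp (fderiv ℝ (fun x => G (αs, x)) xs) = ContinuousLinearMap.id ℝ X ∧
        (fderiv ℝ (fun x => G (αs, x)) xs).comp Ainv = ContinuousLinearMap.id ℝ Y ∧
        ‖Ainv‖ ≤ K)
    (H3 : ∀ (α : P) (x : X), ‖x - xs‖ ≤ ℓx → ‖α - αs‖ ≤ ℓα →
        ‖fderiv ℝ (fun x' => G (α, x')) x - fderiv ℝ (fun x' => G (αs, x')) xs‖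
          ≤ L₁ * ‖x - xs‖ + L₂ * ‖α - αs‖)
    (H4 : ∀ α : P, ‖α - αs‖ ≤ ℓα →
        ‖fderiv ℝ (fun α' => G (α', xs)) α‖ ≤ L₃ + L₄ * ‖α - αs‖)
    (hmain1 : 4 * K ^ 2 * ρ * L₁ < 1) (hmain2 : 2 * K * ρ < ℓx) :
    (∃ δα δx : ℝ, 0 ≤ δα ∧ δα ≤ ℓα ∧ 0 < δx ∧ δx ≤ ℓx ∧
        2 * K * L₁ * δx + 2 * K * L₂ * δα ≤ 1 ∧
        2 * K * ρ + 2 * K * L₃ * δα + 2 * K * L₄ * δα ^ 2 ≤ δx) ∧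
    (∀ δα δx : ℝ, 0 ≤ δα → δα ≤ ℓα → 0 < δx → δx ≤ ℓx →
        2 * K * L₁ * δx + 2 * K * L₂ * δα ≤ 1 →
        2 * K * ρ + 2 * K * L₃ * δα + 2 * K * L₄ * δα ^ 2 ≤ δx →
        ∀ α : P, ‖α - αs‖ ≤ δα →
          ∃! x : X, ‖x - xs‖ ≤ δx ∧ G (α, x) = 0) :=
  constructive_implicit_function_theorem_general G hG αs xs ρ K L₁ L₂ L₃ L₄ ℓx ℓα hρ hK hL₁ hL₂ hL₃
    hL₄ hℓα H1 H2 H3 H4 hmain1 hmain2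
end

section
/- (Linking of branch segments in pseudo-arclength continuation.) Let U be a finite-dimensional real inner product space and give ℝ × U its natural inner product. Suppose the k-th continuation step, started at (λ_k*, u_k*) with direction (μ_k, v_k) ≠ 0, has validated uniqueness constants δ_{k,α} and δ_{k,u}: every zero of F of the form (λ_k*, u_k*) + α(μ_k, v_k) + (σ, x) with 0 ≤ α ≤ δ_{k,α}, (σ, x) ⊥ (μ_k, v_k) and ‖(σ, x)‖ ≤ δ_{k,u} is the unique such zero for that α. Let the (k+1)-st starting point be (λ_{k+1}*, u_{k+1}*) = (λ_k* + α_kμ_k + σ*, u_k* + α_kv_k + x*) with (σ*, x*) ⊥ (μ_k, v_k), and let δ_{k+1,min} = 2K_{k+1}ρ_{k+1} be the accuracy bound of the (k+1)-st validation, i.e., there exists a zero (λ̃, ũ) of F with ‖(λ̃, ũ) − (λ_{k+1}*, u_{k+1}*)‖ < δ_{k+1,min}. If |α_k| + δ_{k+1,min}/‖(μ_k, v_k)‖ < δ_{k,α} and ‖(σ*, x*)‖ + δ_{k+1,min} < δ_{k,u}, then writing (λ̃, ũ) − (λ_k*, u_k*) = (α_k + α⁺)(μ_k, v_k) + (σ*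 + σ⁺, x* + x⁺) with (σ* + σ⁺, x* + x⁺) ⊥ (μ_k, v_k), one has |α_k + α⁺| < δ_{k,α} and ‖(σ* + σ⁺, x* + x⁺)‖ < δ_{k,u}; that is, the exact zero enclosed by the (k+1)-st box lies in the uniqueness region of the k-th box, so the two validated branch segments lie on the same solution branch. -/
open RealInnerProductSpace

private lemma sqrt_tri (a b c d : ℝ) :
    Real.sqrt ((a + b) ^ 2 + (c + d) ^ 2) ≤
      Real.sqrt (a ^ 2 + c ^ 2) + Real.sqrt (b ^ 2 + d ^ 2) := by
  set s := Real.sqrt (a ^ 2 + c ^ 2) with hs_def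
  set t := Real.sqrt (b ^ 2 + d ^ 2) with ht_def
  have hs : s ^ 2 = a ^ 2 + c ^ 2 := Real.sq_sqrt (by positivity)
  have ht : t ^ 2 = b ^ 2 + d ^ 2 := Real.sq_sqrt (by positivity)
  have hsn : 0 ≤ s := Real.sqrt_nonneg _
  have htn : 0 ≤ t := Real.sqrt_nonneg _
  have hst : a * b + c * d ≤ s * t := by
    nlinarith [sq_nonneg (a * d - b * c), mul_nonneg hsn htn]
  have h : (a + b) ^ 2 + (c + d) ^ 2 ≤ (s + t) ^ 2 := by nlinarith
  calc Real.sqrt ((a + b) ^ 2 + (c + d) ^ 2) ≤ Real.sqrt ((s + t) ^ 2) :=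
        Real.sqrt_le_sqrt h
    _ = s + t := Real.sqrt_sq (by positivity)

private lemma pair_tri {U : Type*} [NormedAddCommGroup U]
    (σ₁ σ₂ : ℝ) (x₁ x₂ : U) :
    Real.sqrt ((σ₁ + σ₂) ^ 2 + ‖x₁ + x₂‖ ^ 2) ≤
      Real.sqrt (σ₁ ^ 2 + ‖x₁‖ ^ 2) + Real.sqrt (σ₂ ^ 2 + ‖x₂‖ ^ 2) := by
  have h1 : ‖x₁ + x₂‖ ^ 2 ≤ (‖x₁‖ + ‖x₂‖) ^ 2 := by
    have := norm_add_le x₁ x₂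
    nlinarith [norm_nonneg (x₁ + x₂), norm_nonneg x₁, norm_nonneg x₂]
  calc Real.sqrt ((σ₁ + σ₂) ^ 2 + ‖x₁ + x₂‖ ^ 2)
      ≤ Real.sqrt ((σ₁ + σ₂) ^ 2 + (‖x₁‖ + ‖x₂‖) ^ 2) :=
        Real.sqrt_le_sqrt (by linarith)
    _ ≤ _ := sqrt_tri σ₁ σ₂ ‖x₁‖ ‖x₂‖

/-- linking of branch segments in pseudo-arclength continuation:
`U` a finite-dimensional real inner product space, `ℝ × U` with its natural
(Euclidean) inner product and norm `‖(σ,x)‖ = √(σ² + ‖x‖²)`. If the `k`-th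
step, started at `(λ_k, u_k)` with direction `(μ_k, v_k) ≠ 0`, has a validated
uniqueness region (parameters `δ_{k,α}`, `δ_{k,u}`), the `(k+1)`-st starting
point is `(λ_k + α_k μ_k + σ*, u_k + α_k v_k + x*)` with `(σ*,x*) ⊥ (μ_k,v_k)`,
there is a zero `(λ̃, ũ)` of `F` within `δ_{k+1,min} = 2 K_{k+1} ρ_{k+1}` of it,
and the linking conditions `|α_k| + δ_{k+1,min}/‖(μ_k,v_k)‖ < δ_{k,α}` and
`‖(σ*,x*)‖ + δ_{k+1,min} < δ_{k,u}` hold, then writing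
`(λ̃,ũ) - (λ_k,u_k) = (α_k+α⁺)(μ_k,v_k) + (σ*+σ⁺, x*+x⁺)` with
`(σ*+σ⁺, x*+x⁺) ⊥ (μ_k,v_k)`, one has `|α_k+α⁺| < δ_{k,α}` and
`‖(σ*+σ⁺, x*+x⁺)‖ < δ_{k,u}`: the exact zero lies in the uniqueness region of
the `k`-th box. -/
theorem linking_branch_segments
    {U : Type*} [NormedAddCommGroup U] [InnerProductSpace ℝ U]
    [FiniteDimensional ℝ U]
    (F : ℝ × U → U) (hF : ContDiff ℝ 1 F)
    (lamk : ℝ) (uk : U) (μk : ℝ) (vk : U) (hdir : ¬(μk = 0 ∧ vk = 0))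
    (δkα δku : ℝ)
    (huniq : ∀ α : ℝ, 0 ≤ α → α ≤ δkα →
      ∀ (σ₁ : ℝ) (x₁ : U) (σ₂ : ℝ) (x₂ : U),
        μk * σ₁ + ⟪vk, x₁⟫ = 0 → μk * σ₂ + ⟪vk, x₂⟫ = 0 →
        Real.sqrt (σ₁ ^ 2 + ‖x₁‖ ^ 2) ≤ δku →
        Real.sqrt (σ₂ ^ 2 + ‖x₂‖ ^ 2) ≤ δku →
        F (lamk + α * μk + σ₁, uk + α • vk + x₁) = 0 →
        F (lamk + α * μk + σ₂, uk + α • vk + x₂) = 0 →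
        σ₁ = σ₂ ∧ x₁ = x₂)
    (αk σs : ℝ) (xs : U) (horth : μk * σs + ⟪vk, xs⟫ = 0)
    (lamk1 : ℝ) (uk1 : U)
    (hnext : lamk1 = lamk + αk * μk + σs ∧ uk1 = uk + αk • vk + xs)
    (Knext ρnext δmin : ℝ) (hδmin : δmin = 2 * Knext * ρnext)
    (lamt : ℝ) (ut : U) (hzero : F (lamt, ut) = 0)
    (hacc : Real.sqrt ((lamt - lamk1) ^ 2 + ‖ut - uk1‖ ^ 2) < δmin)
    (hlink1 : |αk| + δmin / Real.sqrt (μk ^ 2 + ‖vk‖ ^ 2) < δkα)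
    (hlink2 : Real.sqrt (σs ^ 2 + ‖xs‖ ^ 2) + δmin < δku)
    (αp σp : ℝ) (xp : U)
    (hdecomp1 : lamt - lamk = (αk + αp) * μk + (σs + σp))
    (hdecomp2 : ut - uk = (αk + αp) • vk + (xs + xp))
    (horthp : μk * (σs + σp) + ⟪vk, xs + xp⟫ = 0) :
    |αk + αp| < δkα ∧
    Real.sqrt ((σs + σp) ^ 2 + ‖xs + xp‖ ^ 2) < δku := by

  -- the direction has positive (squared) norm
  have hnsq : 0 < μk ^ 2 + ‖vk‖ ^ 2 := by
    rcases not_and_or.mp hdir with h | h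
    · have : 0 < μk ^ 2 := by positivity
      nlinarith [sq_nonneg ‖vk‖]
    · have hv : 0 < ‖vk‖ := norm_pos_iff.mpr h
      nlinarith [sq_nonneg μk]
  set n := Real.sqrt (μk ^ 2 + ‖vk‖ ^ 2) with hn_def
  have hn : 0 < n := Real.sqrt_pos.mpr hnsq
  have hn2 : n ^ 2 = μk ^ 2 + ‖vk‖ ^ 2 := Real.sq_sqrt hnsq.le
  -- residual decomposition
  have h1 : lamt - lamk1 = αp * μk + σp := by
    rw [hnext.1]; have := hdecomp1; ring_nf at this ⊢; linarith
  have h2 : ut - uk1 = αp • vk + xp := by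
    have hut : ut = uk + ((αk + αp) • vk + (xs + xp)) := by
      rw [← hdecomp2]; abel
    rw [hnext.2, hut, add_smul]; abel
  -- orthogonality of the residual
  have horth' : μk * σp + ⟪vk, xp⟫ = 0 := by
    rw [inner_add_right] at horthp; linarith [horth, horthp]
  -- Pythagoras for the residual
  have hE : (αp * μk + σp) ^ 2 + ‖αp • vk + xp‖ ^ 2
      = αp ^ 2 * (μk ^ 2 + ‖vk‖ ^ 2) + (σp ^ 2 + ‖xp‖ ^ 2) := by
    have hexp : ‖αp • vk + xp‖ ^ 2
        = ‖αp • vk‖ ^ 2 + 2 * ⟪αp • vk, xp⟫ + ‖xp‖ ^ 2 := by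
      rw [@norm_add_sq_real]
    have hns : ‖αp • vk‖ ^ 2 = αp ^ 2 * ‖vk‖ ^ 2 := by
      rw [norm_smul]; simp [mul_pow, sq_abs]
    have hin : ⟪αp • vk, xp⟫ = αp * ⟪vk, xp⟫ := real_inner_smul_left _ _ _
    have hip : ⟪vk, xp⟫ = -(μk * σp) := by linarith
    rw [hexp, hns, hin, hip]; ring
  rw [h1, h2] at hacc
  have hEmin : Real.sqrt (αp ^ 2 * (μk ^ 2 + ‖vk‖ ^ 2) + (σp ^ 2 + ‖xp‖ ^ 2))
      < δmin := by rwa [← hE]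
  have hEnn : (0:ℝ) ≤ σp ^ 2 + ‖xp‖ ^ 2 := by positivity
  -- bound on σp, xp
  have hres : Real.sqrt (σp ^ 2 + ‖xp‖ ^ 2) < δmin := by
    refine lt_of_le_of_lt (Real.sqrt_le_sqrt ?_) hEmin
    have : 0 ≤ αp ^ 2 * (μk ^ 2 + ‖vk‖ ^ 2) := by positivity
    linarith
  -- bound on αp
  have hαp : |αp| * n < δmin := by
    have : |αp| * n = Real.sqrt (αp ^ 2 * (μk ^ 2 + ‖vk‖ ^ 2)) := by
      rw [Real.sqrt_mul (sq_nonneg αp), Real.sqrt_sq_eq_abs]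
    rw [this]
    exact lt_of_le_of_lt (Real.sqrt_le_sqrt (by linarith)) hEmin
  have hαp' : |αp| < δmin / n := (lt_div_iff₀ hn).mpr hαp
  constructor
  · calc |αk + αp| ≤ |αk| + |αp| := abs_add_le _ _
      _ < |αk| + δmin / n := by linarith
      _ < δkα := hlink1
  · calc Real.sqrt ((σs + σp) ^ 2 + ‖xs + xp‖ ^ 2)
        ≤ Real.sqrt (σs ^ 2 + ‖xs‖ ^ 2) + Real.sqrt (σp ^ 2 + ‖xp‖ ^ 2) :=
          pair_tri σs σp xs xp
      _ < Real.sqrt (σs ^ 2 + ‖xs‖ ^ 2) + δmin := by linarith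
      _ < δku := hlink2
end

section
/- Let U be a finite-dimensional real inner product space, F : ℝ × U → U continuously differentiable, (λ₀, u₀) ∈ ℝ × U, (μ₀, v₀) ∈ ℝ × U, and define G(α, (σ, x)) = (μ₀σ + ⟨v₀, x⟩, F(λ₀ + αμ₀ + σ, u₀ + αv₀ + x)). Suppose ‖D_λF(λ₀, u₀)μ₀ + D_uF(λ₀, u₀)v₀‖_U ≤ ξ, and there are constants M₁, M₂, M₃, M₄ such that for (λ, u) in a suitable neighborhood of (λ₀, u₀) one has ‖D_uF(λ, u) − D_uF(λ₀, u₀)‖ ≤ M₁‖u − u₀‖_U + M₂|λ − λ₀| and ‖D_λF(λ, u) − D_λF(λ₀, u₀)‖ ≤ M₃‖u − u₀‖_U + M₄|λ − λ₀|. Then, with L₃ = ξ and L₄ = (M₁‖v₀‖_U + M₂|μ₀|)‖v₀‖_U + (M₃‖v₀‖_U + M₄|μ₀|)|μ₀|, the derivative of G with respect to the parameter α evaluated at (σ, x) = (0, 0) satisfies ‖D_αG(α, (0, 0))‖ ≤ L₃ + L₄|α| for all α such that (λ₀ + αμ₀, u₀ + αv₀) remains in the neighborhood where the Lipschitz estimates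 hold. -/
/-! At `(σ, x) = (0, 0)` the first component of `G` is constant and the second is `F` along the
line through `(λ₀, u₀)` with direction `(μ₀, v₀)`, so `D_αG(α, (0, 0))` is
`(0, D_λF(λ₀ + αμ₀, u₀ + αv₀) μ₀ + D_uF(λ₀ + αμ₀, u₀ + αv₀) v₀)`. Comparing both partial
derivatives with their values at `(λ₀, u₀)` through the Lipschitz bounds gives the estimate. -/

open RealInnerProductSpace

section

variable {𝕜 E E₁ E₂ F : Type*} [NontriviallyNormedField 𝕜]
  [NormedAddCommGroup E] [NormedSpace 𝕜 E] [NormedAddCommGroup E₁] [NormedSpace 𝕜 E₁]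
  [NormedAddCommGroup E₂] [NormedSpace 𝕜 E₂] [NormedAddCommGroup F] [NormedSpace 𝕜 F]

theorem fderiv_prod_apply_eq_add_partials {f : E₁ × E₂ → F} {p : E₁ × E₂}
    (hf : DifferentiableAt 𝕜 f p) (w : E₁ × E₂) :
    fderiv 𝕜 f p w =
      fderiv 𝕜 (fun x => f (x, p.2)) p.1 w.1 + fderiv 𝕜 (fun y => f (p.1, y)) p.2 w.2 := by
  have h₁ : HasFDerivAt (fun x => f (x, p.2)) ((fderiv 𝕜 f p).comp (.inl 𝕜 E₁ E₂)) p.1 :=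
    hf.hasFDerivAt.comp p.1 ((hasFDerivAt_id p.1).prodMk (hasFDerivAt_const p.2 p.1))
  have h₂ : HasFDerivAt (fun y => f (p.1, y)) ((fderiv 𝕜 f p).comp (.inr 𝕜 E₁ E₂)) p.2 :=
    hf.hasFDerivAt.comp p.2 ((hasFDerivAt_const p.1 p.2).prodMk (hasFDerivAt_id p.2))
  rw [h₁.fderiv, h₂.fderiv]
  simp [← map_add]

theorem hasDerivAt_comp_line {f : E → F} {p w : E} {a : 𝕜}
    (hf : DifferentiableAt 𝕜 f (p + a • w)) :
    HasDerivAt (fun t : 𝕜 => f (p + t • w)) (fderiv 𝕜 f (p + a • w) w) a := by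
  have hline : HasDerivAt (fun t : 𝕜 => p + t • w) w a := by
    simpa using ((hasDerivAt_id a).smul_const w).const_add p
  exact hf.hasFDerivAt.comp_hasDerivAt a hline

theorem ContinuousLinearMap.norm_add_apply_le_of_sub
    (A A₀ : E₁ →L[𝕜] F) (B B₀ : E₂ →L[𝕜] F) (x : E₁) (y : E₂) :
    ‖A x + B y‖ ≤ ‖A₀ x + B₀ y‖ + ‖A - A₀‖ * ‖x‖ + ‖B - B₀‖ * ‖y‖ := by
  have hsplit : A x + B y = (A₀ x + B₀ y) + (A - A₀) x + (B - B₀) y := by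
    simp only [sub_apply]; abel
  rw [hsplit]
  exact norm_add₃_le.trans
    (add_le_add_three le_rfl ((A - A₀).le_opNorm x) ((B - B₀).le_opNorm y))

end

theorem extended_map_parameter_derivative_bound_general
    {U : Type*} [NormedAddCommGroup U] [InnerProductSpace ℝ U]
    (F : ℝ × U → U) (hF : ContDiff ℝ 1 F)
    (lam₀ : ℝ) (u₀ : U) (μ₀ : ℝ) (v₀ : U)
    (G : ℝ → ℝ × U → ℝ × U)
    (hGdef : ∀ (α : ℝ) (p : ℝ × U),
      G α p = (μ₀ * p.1 + ⟪v₀, p.2⟫,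
               F (lam₀ + α * μ₀ + p.1, u₀ + α • v₀ + p.2)))
    (ξ M₁ M₂ M₃ M₄ du dlam : ℝ)
    (hξ : ‖fderiv ℝ (fun l => F (l, u₀)) lam₀ μ₀ +
           fderiv ℝ (fun u => F (lam₀, u)) u₀ v₀‖ ≤ ξ)
    (hP3a : ∀ (lam : ℝ) (u : U), ‖u - u₀‖ ≤ du → |lam - lam₀| ≤ dlam →
        ‖fderiv ℝ (fun w => F (lam, w)) u - fderiv ℝ (fun w => F (lam₀, w)) u₀‖
          ≤ M₁ * ‖u - u₀‖ + M₂ * |lam - lam₀|)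
    (hP3b : ∀ (lam : ℝ) (u : U), ‖u - u₀‖ ≤ du → |lam - lam₀| ≤ dlam →
        ‖fderiv ℝ (fun l => F (l, u)) lam - fderiv ℝ (fun l => F (l, u₀)) lam₀‖
          ≤ M₃ * ‖u - u₀‖ + M₄ * |lam - lam₀|)
    (α : ℝ) (hin_u : ‖α • v₀‖ ≤ du) (hin_lam : |α * μ₀| ≤ dlam) :
    ‖fderiv ℝ (fun a : ℝ => G a (0, 0)) α‖
      ≤ ξ + ((M₁ * ‖v₀‖ + M₂ * |μ₀|) * ‖v₀‖ +
             (M₃ * ‖v₀‖ + M₄ * |μ₀|) * |μ₀|) * |α| := by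
  have hFdiff : Differentiable ℝ F := hF.differentiable one_ne_zero
  have hcurve :
      (fun a : ℝ => G a (0, 0)) = fun a => ((0 : ℝ), F ((lam₀, u₀) + a • (μ₀, v₀))) := by
    funext a
    simp [hGdef, mul_comm]
  have hderiv := (hasDerivAt_const α (0 : ℝ)).prodMk
    (hasDerivAt_comp_line (p := (lam₀, u₀)) (w := (μ₀, v₀)) (hFdiff _))
  rw [hcurve, ← norm_deriv_eq_norm_fderiv, hderiv.deriv, Prod.norm_mk, norm_zero,
    max_eq_right (norm_nonneg _),
    fderiv_prod_apply_eq_add_partials (hFdiff _)]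
  simp only [Prod.smul_mk, Prod.mk_add_mk, smul_eq_mul, mul_comm α μ₀]
  have hu : ‖u₀ + α • v₀ - u₀‖ ≤ du := by rwa [add_sub_cancel_left]
  have hlam : |lam₀ + μ₀ * α - lam₀| ≤ dlam := by rwa [add_sub_cancel_left, mul_comm]
  have hB := hP3a _ _ hu hlam
  have hA := hP3b _ _ hu hlam
  rw [add_sub_cancel_left, add_sub_cancel_left, norm_smul, Real.norm_eq_abs, abs_mul] at hA hB
  calc _ ≤ _ := ContinuousLinearMap.norm_add_apply_le_of_sub _ _ _ _ μ₀ v₀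
    _ ≤ ξ + (M₃ * (|α| * ‖v₀‖) + M₄ * (|μ₀| * |α|)) * |μ₀|
          + (M₁ * (|α| * ‖v₀‖) + M₂ * (|μ₀| * |α|)) * ‖v₀‖ := by
        rw [Real.norm_eq_abs]
        gcongr
    _ = _ := by ring

/-- for `F : ℝ × U → U` C¹ with
`‖D_λF(λ₀,u₀)μ₀ + D_uF(λ₀,u₀)v₀‖ ≤ ξ` and Lipschitz bounds (constants
`M₁…M₄` on the neighborhood `‖u-u₀‖ ≤ d_u`, `|λ-λ₀| ≤ d_λ`) for `D_uF` and
`D_λF`, the extended map `G(α,(σ,x)) = (μ₀σ + ⟪v₀,x⟫, F(λ₀+αμ₀+σ, u₀+αv₀+x))`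
satisfies, with `L₃ = ξ` and
`L₄ = (M₁‖v₀‖+M₂|μ₀|)‖v₀‖ + (M₃‖v₀‖+M₄|μ₀|)|μ₀|`, the estimate
`‖D_αG(α,(0,0))‖ ≤ L₃ + L₄|α|` for all `α` such that `(λ₀+αμ₀, u₀+αv₀)`
remains in that neighborhood; `ℝ × U` carries the norm
`‖(α,x)‖ = max(|α|,‖x‖)` (the product norm) and operator norms are induced
by it. -/
theorem extended_map_parameter_derivative_bound
    {U : Type*} [NormedAddCommGroup U] [InnerProductSpace ℝ U]
    [FiniteDimensional ℝ U]
    (F : ℝ × U → U) (hF : ContDiff ℝ 1 F)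
    (lam₀ : ℝ) (u₀ : U) (μ₀ : ℝ) (v₀ : U)
    (G : ℝ → ℝ × U → ℝ × U)
    (hGdef : ∀ (α : ℝ) (p : ℝ × U),
      G α p = (μ₀ * p.1 + ⟪v₀, p.2⟫,
               F (lam₀ + α * μ₀ + p.1, u₀ + α • v₀ + p.2)))
    (ξ M₁ M₂ M₃ M₄ du dlam : ℝ) (hdu : 0 < du) (hdlam : 0 < dlam)
    (hξ : ‖fderiv ℝ (fun l => F (l, u₀)) lam₀ μ₀ +
           fderiv ℝ (fun u => F (lam₀, u)) u₀ v₀‖ ≤ ξ)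
    (hP3a : ∀ (lam : ℝ) (u : U), ‖u - u₀‖ ≤ du → |lam - lam₀| ≤ dlam →
        ‖fderiv ℝ (fun w => F (lam, w)) u - fderiv ℝ (fun w => F (lam₀, w)) u₀‖
          ≤ M₁ * ‖u - u₀‖ + M₂ * |lam - lam₀|)
    (hP3b : ∀ (lam : ℝ) (u : U), ‖u - u₀‖ ≤ du → |lam - lam₀| ≤ dlam →
        ‖fderiv ℝ (fun l => F (l, u)) lam - fderiv ℝ (fun l => F (l, u₀)) lam₀‖
          ≤ M₃ * ‖u - u₀‖ + M₄ * |lam - lam₀|)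
    (α : ℝ) (hin_u : ‖α • v₀‖ ≤ du) (hin_lam : |α * μ₀| ≤ dlam) :
    ‖fderiv ℝ (fun a : ℝ => G a (0, 0)) α‖
      ≤ ξ + ((M₁ * ‖v₀‖ + M₂ * |μ₀|) * ‖v₀‖ +
             (M₃ * ‖v₀‖ + M₄ * |μ₀|) * |μ₀|) * |α| :=
  extended_map_parameter_derivative_bound_general F hF lam₀ u₀ μ₀ v₀ G hGdef ξ M₁ M₂ M₃ M₄ du dlam
    hξ hP3a hP3b α hin_u hin_lam
end

section
/- (Transversality at the transcritical bifurcation.) For the red coral model at λ* = c₂/(c₁(b·a)), with right eigenvector v = a (a₁ = 1, a_k = ∏_{i=1}^{k−1} S_i) and left eigenvector w (w₁ = b·a, w₁₃ = b₁₃, w_k = b_k + S_k w_{k+1} for k = 2,…,12) of D_x f(λ*, 0) for the eigenvalue 1, the mixed second derivative satisfies wᵗ D_{xλ}f(λ*, 0)v = (c₁/c₂)(b·a)·w₁ = (c₁/c₂)(b·a)², and in particular wᵗ D_{xλ}f(λ*, 0)v > 0; moreover wᵗ D_λf(λ*, 0) = 0. -/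
noncomputable section

open Real Finset Matrix

namespace RedCoral

/-- Survival rates `S₁,…,S₁₂` (1-based index; all other indices map to 0). -/
def Sr : ℕ → ℝ
  | 1 => 0.89
  | 2 => 0.63
  | 3 => 0.70
  | 4 => 0.52
  | 5 => 0.44
  | 6 => 0.29
  | 7 => 0.57
  | 8 => 0.33
  | 9 => 0.75
  | 10 => 1
  | 11 => 0.33
  | 12 => 1
  | _ => 0

/-- Fertility rates `F₁,…,F₁₃` (1-based index). -/
def Fert : ℕ → ℝ
  | 3 => 0.36
  | 4 => 0.64
  | 5 => 0.82
  | 6 => 0.97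
  | 7 => 0.98
  | 8 => 0.99
  | 9 => 1
  | 10 => 1
  | 11 => 1
  | 12 => 1
  | 13 => 1
  | _ => 0

/-- Birth rates `b_k = F_k k^{2.324}`. -/
def br (k : ℕ) : ℝ := Fert k * (k : ℝ) ^ (2.324 : ℝ)

/-- Polyps per colony `p_k = 1.239 k^{2.324}`. -/
def pr (k : ℕ) : ℝ := 1.239 * (k : ℝ) ^ (2.324 : ℝ)

def c1 : ℝ := 1.8e5
def c2 : ℝ := 1.3e7
def αr : ℝ := 5e-4
def βr : ℝ := 3.4e-3
def Ωr : ℝ := 36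

/-- Recruit function `φ(y) = c₁ e^{-αy} / (y² + c₂ e^{-βy})`. -/
def φr (y : ℝ) : ℝ := c1 * Real.exp (-αr * y) / (y ^ 2 + c2 * Real.exp (-βr * y))

/-- Polyp density `P(x) = (1/Ω) Σ_{k=2}^{13} p_k x_k` (0-based coordinates:
coordinate `i` is age group `i+1`). -/
def Pd (x : Fin 13 → ℝ) : ℝ :=
  (1 / Ωr) * ∑ i : Fin 13, if i.val = 0 then 0 else pr (i.val + 1) * x i

/-- The red coral model map `f : ℝ × ℝ¹³ → ℝ¹³`:
`f₁(λ,x) = λ φ(P(x)) Σ_k b_k x_k`, `f_{k+1}(λ,x) = S_k x_k`. -/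
def fc (lam : ℝ) (x : Fin 13 → ℝ) : Fin 13 → ℝ := fun i =>
  if _h : i.val = 0 then lam * φr (Pd x) * ∑ j : Fin 13, br (j.val + 1) * x j
  else Sr i.val * x ⟨i.val - 1, by have := i.isLt; omega⟩

/-- Cumulative survival `a₁ = 1`, `a_k = ∏_{i=1}^{k-1} S_i` (here `ar k` is the
1-based `a_{k+1}`, i.e. `ar k = ∏_{j=1}^{k} S_j`, so the 0-based coordinate `i`
carries `a_{i+1} = ar i`). -/
def ar (k : ℕ) : ℝ := ∏ j ∈ Finset.Icc 1 k, Sr j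

/-- `b·a = Σ_{k=1}^{13} a_k b_k`. -/
def ba : ℝ := ∑ i : Fin 13, ar i.val * br (i.val + 1)

/-- `Σ_{k=2}^{13} p_k a_k`. -/
def sumPA : ℝ := ∑ i : Fin 13, if i.val = 0 then 0 else pr (i.val + 1) * ar i.val

/-- The vector `a = (a₁,…,a₁₃)`. -/
def avec : Fin 13 → ℝ := fun i => ar i.val

/-- The Leslie matrix `D_x f(λ,0)`: first row `λ (c₁/c₂) b_j`, subdiagonal
`S₁,…,S₁₂`, all other entries zero. -/
def Jmat (lam : ℝ) : Matrix (Fin 13) (Fin 13) ℝ := Matrix.of fun i j =>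
  if i.val = 0 then lam * (c1 / c2) * br (j.val + 1)
  else if j.val + 1 = i.val then Sr i.val else 0

lemma Sr_nonneg (n : ℕ) : 0 ≤ Sr n := by
  unfold Sr; split <;> norm_num

lemma Fert_nonneg (n : ℕ) : 0 ≤ Fert n := by
  unfold Fert; split <;> norm_num

lemma br_nonneg (n : ℕ) : 0 ≤ br n :=
  mul_nonneg (Fert_nonneg n) (Real.rpow_nonneg (Nat.cast_nonneg n) _)

lemma ar_nonneg (n : ℕ) : 0 ≤ ar n :=
  Finset.prod_nonneg fun j _ => Sr_nonneg j

lemma ba_pos : 0 < ba := by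
  refine Finset.sum_pos' (fun i _ => mul_nonneg (ar_nonneg _) (br_nonneg _)) ⟨2, Finset.mem_univ _, ?_⟩
  have h1 : ar (2 : Fin 13).val = 0.89 * 0.63 := by
    show (∏ j ∈ Finset.Icc 1 2, Sr j) = _
    rw [show Finset.Icc 1 2 = {1, 2} from rfl]
    simp [Sr]
  have h2 : br ((2 : Fin 13).val + 1) = 0.36 * (3 : ℝ) ^ (2.324 : ℝ) := by
    show Fert 3 * _ = _
    norm_num [Fert]
  rw [h1, h2]
  positivity

/-- transversality at the transcritical bifurcation: at
`λ* = c₂/(c₁(b·a))`, with right eigenvector `v = a` and left eigenvector `w`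
(`w₁ = b·a`, `w₁₃ = b₁₃`, `w_k = b_k + S_k w_{k+1}` for `k = 2,…,12`), the
mixed second derivative `wᵗ D_{xλ}f(λ*,0) v` — the derivative in `λ` at `λ*`
of `λ ↦ wᵗ D_x f(λ,0) v = wᵗ (Jmat λ) v` — equals `(c₁/c₂)(b·a) w₁ =
(c₁/c₂)(b·a)²` and is positive; moreover `wᵗ D_λ f(λ*,0) = 0`. -/
theorem red_coral_transversality (w : Fin 13 → ℝ)
    (h0 : w 0 = ba) (h12 : w 12 = br 13)
    (hrec : ∀ i : Fin 13, 1 ≤ i.val → i.val ≤ 11 →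
      w i = br (i.val + 1) + Sr (i.val + 1) * w (i + 1)) :
    deriv (fun lam => w ⬝ᵥ (Jmat lam).mulVec avec) (c2 / (c1 * ba))
        = (c1 / c2) * ba * w 0 ∧
    deriv (fun lam => w ⬝ᵥ (Jmat lam).mulVec avec) (c2 / (c1 * ba))
        = (c1 / c2) * ba ^ 2 ∧
    0 < deriv (fun lam => w ⬝ᵥ (Jmat lam).mulVec avec) (c2 / (c1 * ba)) ∧
    ∑ i : Fin 13, w i * deriv (fun lam => fc lam (0 : Fin 13 → ℝ) i) (c2 / (c1 * ba)) = 0 := by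
  have hfun : (fun lam => w ⬝ᵥ (Jmat lam).mulVec avec)
      = fun lam => ((c1 / c2) * ba * w 0) * lam + w ⬝ᵥ (Jmat 0).mulVec avec := by
    funext lam
    simp only [dotProduct, mulVec, Jmat, Matrix.of_apply, ba, avec, Fin.sum_univ_succ,
      Fin.isValue, Fin.val_zero, Fin.val_succ, Finset.sum_empty, Fin.sum_univ_zero]
    norm_num
    ring
  have hderiv : deriv (fun lam => w ⬝ᵥ (Jmat lam).mulVec avec) (c2 / (c1 * ba))
      = (c1 / c2) * ba * w 0 := by
    rw [hfun]
    have : HasDerivAt (fun lam : ℝ => ((c1 / c2) * ba * w 0) * lam + w ⬝ᵥ (Jmat 0).mulVec avec)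
        ((c1 / c2) * ba * w 0) (c2 / (c1 * ba)) := by
      simpa using ((hasDerivAt_id (c2 / (c1 * ba))).const_mul ((c1 / c2) * ba * w 0)).add_const
        (w ⬝ᵥ (Jmat 0).mulVec avec)
    exact this.deriv
  have hderiv2 : deriv (fun lam => w ⬝ᵥ (Jmat lam).mulVec avec) (c2 / (c1 * ba))
      = (c1 / c2) * ba ^ 2 := by
    rw [hderiv, h0]; ring
  refine ⟨hderiv, hderiv2, ?_, ?_⟩
  · rw [hderiv2]
    have hc1 : (0:ℝ) < c1 := by norm_num [c1]
    have hc2 : (0:ℝ) < c2 := by norm_num [c2]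
    have := ba_pos
    positivity
  · have hzero : ∀ i : Fin 13, (fun lam => fc lam (0 : Fin 13 → ℝ) i) = fun _ => 0 := by
      intro i; funext lam
      simp [fc]
    refine Finset.sum_eq_zero fun i _ => ?_
    rw [hzero i, deriv_const, mul_zero]


end RedCoral
end
end

section
/- (Validated saddle-node point, existence part.) For the red coral model there exist a parameter value λ₀ with 0.4212 ≤ λ₀ ≤ 0.4214 (equivalently basic reproduction number R₀ = (b·a)λ₀ with 12.27 ≤ R₀ ≤ 12.29), a fixed point x₀ ∈ ℝ¹³ of f(λ₀, ·) with first component 569.4 ≤ (x₀)₁ ≤ 569.6 and polyp density 853.3 ≤ P(x₀) ≤ 853.5, and a unit vector v ∈ ℝ¹³ such that D_x f(λ₀, x₀)v = v; that is, 1 is an eigenvalue of the Jacobian at this nontrivial fixed point. -/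
noncomputable section

open Real Finset Matrix

namespace RedCoral

/-!
Every fixed point of `f(λ, ·)` is a multiple `t a` of the cumulative-survival vector `a`, with
`λ φ(P(t a)) (b·a) = 1`. Writing `f(λ, x) = L(λ φ(P x)) x`, where `L(r)` is the Leslie matrix with
first row `r b` and subdiagonal `S`, the Jacobian at `x` is `L(λ φ(P x))` plus a rank-one term
proportional to `φ'(P x)`. At a critical point `y` of `φ` that term vanishes, so taking
`P(t a) = y` and `λ = 1 / ((b·a) φ(y))` makes `t a` a fixed point whose Jacobian fixes `a`.
The critical point is located in `[853.41, 853.43]` by the intermediate value theorem; the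
numerical bounds come from Taylor bounds for `exp` and from `k ^ 2.324 = (k ^ 581) ^ (1/250)`.
-/

lemma le_rpow_div_of_pow_le {x lo : ℝ} {p q : ℕ} (hlo : 0 ≤ lo) (hq : q ≠ 0)
    (h : lo ^ q ≤ x ^ p) (hx : 0 ≤ x) : lo ≤ x ^ ((p : ℝ) / q) := by
  calc lo = (lo ^ q) ^ ((q : ℝ)⁻¹) := (Real.pow_rpow_inv_natCast hlo hq).symm
    _ ≤ (x ^ p) ^ ((q : ℝ)⁻¹) := Real.rpow_le_rpow (by positivity) h (by positivity)
    _ = x ^ ((p : ℝ) / q) := by rw [div_eq_mul_inv, Real.rpow_natCast_mul hx]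

lemma rpow_div_le_of_pow_le {x hi : ℝ} {p q : ℕ} (hx : 0 ≤ x) (hq : q ≠ 0)
    (h : x ^ p ≤ hi ^ q) (hhi : 0 ≤ hi) : x ^ ((p : ℝ) / q) ≤ hi := by
  calc x ^ ((p : ℝ) / q) = (x ^ p) ^ ((q : ℝ)⁻¹) := by
        rw [div_eq_mul_inv, Real.rpow_natCast_mul hx]
    _ ≤ (hi ^ q) ^ ((q : ℝ)⁻¹) := Real.rpow_le_rpow (by positivity) h (by positivity)
    _ = hi := Real.pow_rpow_inv_natCast hhi hq

/-- `k ^ 581` is written `(k ^ 7) ^ 83` because `norm_num` does not evaluate powers with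
exponent above 256. -/
lemma rpow_2324_mem_Icc {k q : ℝ} (hk : 0 ≤ k) (hq : 0 ≤ q)
    (h : q ^ 250 ≤ (k ^ 7) ^ 83 ∧ (k ^ 7) ^ 83 ≤ (q + 0.0001) ^ 250) :
    k ^ (2.324 : ℝ) ∈ Set.Icc q (q + 0.0001) := by
  rw [← pow_mul] at h
  rw [show (2.324 : ℝ) = ((581 : ℕ) : ℝ) / (250 : ℕ) by norm_num]
  exact ⟨le_rpow_div_of_pow_le hq (by norm_num) h.1 hk,
    rpow_div_le_of_pow_le hk (by norm_num) h.2 (by positivity)⟩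

lemma natCast_rpow_2324_mem_Icc :
    (2 : ℝ) ^ (2.324 : ℝ) ∈ Set.Icc 5.0071 (5.0071 + 0.0001) ∧
    (3 : ℝ) ^ (2.324 : ℝ) ∈ Set.Icc 12.8478 (12.8478 + 0.0001) ∧
    (4 : ℝ) ^ (2.324 : ℝ) ∈ Set.Icc 25.0719 (25.0719 + 0.0001) ∧
    (5 : ℝ) ^ (2.324 : ℝ) ∈ Set.Icc 42.112 (42.112 + 0.0001) ∧
    (6 : ℝ) ^ (2.324 : ℝ) ∈ Set.Icc 64.3314 (64.3314 + 0.0001) ∧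
    (7 : ℝ) ^ (2.324 : ℝ) ∈ Set.Icc 92.0466 (92.0466 + 0.0001) ∧
    (8 : ℝ) ^ (2.324 : ℝ) ∈ Set.Icc 125.5397 (125.5397 + 0.0001) ∧
    (9 : ℝ) ^ (2.324 : ℝ) ∈ Set.Icc 165.0667 (165.0667 + 0.0001) ∧
    (10 : ℝ) ^ (2.324 : ℝ) ∈ Set.Icc 210.8628 (210.8628 + 0.0001) ∧
    (11 : ℝ) ^ (2.324 : ℝ) ∈ Set.Icc 263.1458 (263.1458 + 0.0001) ∧
    (12 : ℝ) ^ (2.324 : ℝ) ∈ Set.Icc 322.1196 (322.1196 + 0.0001) ∧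
    (13 : ℝ) ^ (2.324 : ℝ) ∈ Set.Icc 387.9755 (387.9755 + 0.0001) := by
  refine ⟨?_, ?_, ?_, ?_, ?_, ?_, ?_, ?_, ?_, ?_, ?_, ?_⟩ <;>
    exact rpow_2324_mem_Icc (by norm_num) (by norm_num) (by norm_num)

lemma ar_zero : ar 0 = 1 := by simp [ar]

lemma ar_succ (k : ℕ) : ar (k + 1) = ar k * Sr (k + 1) :=
  Finset.prod_Icc_succ_top (Nat.succ_le_succ (Nat.zero_le k)) Sr

lemma ba_mem_Icc : ba ∈ Set.Icc 29.1478 29.148 := by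
  obtain ⟨-, h3, h4, h5, h6, h7, h8, h9, h10, h11, h12, h13⟩ := natCast_rpow_2324_mem_Icc
  simp only [Set.mem_Icc] at *
  norm_num [ba, Fin.sum_univ_succ, br, ar, Finset.prod_Icc_succ_top, Fert, Sr] at *
  constructor <;> linarith

lemma sumPA_mem_Icc : sumPA ∈ Set.Icc 53.951 53.9515 := by
  obtain ⟨h2, h3, h4, h5, h6, h7, h8, h9, h10, h11, h12, h13⟩ := natCast_rpow_2324_mem_Icc
  simp only [Set.mem_Icc] at *
  norm_num [sumPA, Fin.sum_univ_succ, pr, ar, Finset.prod_Icc_succ_top, Sr] at *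
  constructor <;> linarith

lemma le_exp_of_taylor {x lo : ℝ} (hx : |x| ≤ 1) {n : ℕ} (hn : 0 < n)
    (h : lo ≤ ∑ m ∈ range n, x ^ m / m.factorial - |x| ^ n * (n.succ / (n.factorial * n))) :
    lo ≤ exp x := by
  linarith [(abs_sub_le_iff.1 (Real.exp_bound hx hn)).2]

lemma exp_le_of_taylor {x hi : ℝ} (hx : |x| ≤ 1) {n : ℕ} (hn : 0 < n)
    (h : ∑ m ∈ range n, x ^ m / m.factorial + |x| ^ n * (n.succ / (n.factorial * n)) ≤ hi) :
    exp x ≤ hi := by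
  linarith [(abs_sub_le_iff.1 (Real.exp_bound hx hn)).1]

lemma exp_nat_mul_mem_Icc {x lo hi : ℝ} (h : exp x ∈ Set.Icc lo hi) (hlo : 0 ≤ lo) (n : ℕ) :
    exp (n * x) ∈ Set.Icc (lo ^ n) (hi ^ n) := by
  rw [Real.exp_nat_mul]
  exact ⟨pow_le_pow_left₀ hlo h.1 n, pow_le_pow_left₀ (hlo.trans h.1) h.2 n⟩

lemma exp_neg_βr_mul_853_41_mem_Icc :
    exp (-βr * 853.41) ∈ Set.Icc (0.38014671 ^ 3) (0.38014672 ^ 3) := by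
  rw [show -βr * 853.41 = (3 : ℕ) * -0.967198 by norm_num [βr]]
  have hx : |(-0.967198 : ℝ)| ≤ 1 := by norm_num [abs_of_neg]
  exact exp_nat_mul_mem_Icc
    ⟨le_exp_of_taylor hx (n := 12) (by norm_num)
      (by norm_num [Finset.sum_range_succ, Nat.factorial, abs_of_neg]),
     exp_le_of_taylor hx (n := 12) (by norm_num)
      (by norm_num [Finset.sum_range_succ, Nat.factorial, abs_of_neg])⟩ (by norm_num) 3

lemma exp_neg_βr_mul_853_43_mem_Icc :
    exp (-βr * 853.43) ∈ Set.Icc (0.38013809 ^ 3) (0.38013811 ^ 3) := by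
  rw [show -βr * 853.43 = (3 : ℕ) * -(1450831 / 1500000) by norm_num [βr]]
  have hx : |(-(1450831 / 1500000) : ℝ)| ≤ 1 := by norm_num [abs_of_neg]
  exact exp_nat_mul_mem_Icc
    ⟨le_exp_of_taylor hx (n := 12) (by norm_num)
      (by norm_num [Finset.sum_range_succ, Nat.factorial, abs_of_neg]),
     exp_le_of_taylor hx (n := 12) (by norm_num)
      (by norm_num [Finset.sum_range_succ, Nat.factorial, abs_of_neg])⟩ (by norm_num) 3

lemma exp_neg_βr_mul_mem_Icc {y : ℝ} (hy : y ∈ Set.Icc 853.41 853.43) :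
    exp (-βr * y) ∈ Set.Icc (0.38013809 ^ 3) (0.38014672 ^ 3) := by
  have hβ : 0 < βr := by norm_num [βr]
  constructor
  · refine exp_neg_βr_mul_853_43_mem_Icc.1.trans (exp_le_exp.2 ?_)
    nlinarith [hy.2]
  · refine (exp_le_exp.2 ?_).trans exp_neg_βr_mul_853_41_mem_Icc.2
    nlinarith [hy.1]

lemma exp_neg_αr_mul_mem_Icc {y : ℝ} (hy : y ∈ Set.Icc 853.41 853.43) :
    exp (-αr * y) ∈ Set.Icc 0.65264953 0.65265606 := by
  have hα : 0 < αr := by norm_num [αr]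
  have hlo : 0.65264953 ≤ exp (-αr * 853.43) :=
    le_exp_of_taylor (by norm_num [αr, abs_of_neg]) (n := 12) (by norm_num)
      (by norm_num [αr, Finset.sum_range_succ, Nat.factorial, abs_of_neg])
  have hhi : exp (-αr * 853.41) ≤ 0.65265606 :=
    exp_le_of_taylor (by norm_num [αr, abs_of_neg]) (n := 12) (by norm_num)
      (by norm_num [αr, Finset.sum_range_succ, Nat.factorial, abs_of_neg])
  constructor
  · refine hlo.trans (exp_le_exp.2 ?_)
    nlinarith [hy.2]
  · refine (exp_le_exp.2 ?_).trans hhi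
    nlinarith [hy.1]

def φrDerivNumerator (y : ℝ) : ℝ := (βr - αr) * c2 * exp (-βr * y) - 2 * y - αr * y ^ 2

lemma φr_denom_pos (y : ℝ) : 0 < y ^ 2 + c2 * exp (-βr * y) := by
  have := exp_pos (-βr * y); unfold c2; positivity

lemma hasDerivAt_φr (y : ℝ) :
    HasDerivAt φr
      (c1 * exp (-αr * y) * φrDerivNumerator y / (y ^ 2 + c2 * exp (-βr * y)) ^ 2) y := by
  have hnum := ((hasDerivAt_id y).const_mul (-αr)).exp.const_mul c1
  have hden := (hasDerivAt_pow 2 y).fun_add (((hasDerivAt_id y).const_mul (-βr)).exp.const_mul c2)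
  refine (hnum.fun_div hden (φr_denom_pos y).ne').congr_deriv ?_
  simp only [id, mul_one, φrDerivNumerator]
  ring

lemma φr_mem_Icc {y : ℝ} (hy : y ∈ Set.Icc 853.41 853.43) : φr y ∈ Set.Icc 0.081439 0.081445 := by
  obtain ⟨hA₁, hA₂⟩ := exp_neg_αr_mul_mem_Icc hy
  obtain ⟨hE₁, hE₂⟩ := exp_neg_βr_mul_mem_Icc hy
  obtain ⟨hy₁, hy₂⟩ := hy
  have hden := φr_denom_pos y
  unfold φr
  rw [Set.mem_Icc, le_div_iff₀ hden, div_le_iff₀ hden]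
  simp only [c1, c2] at *
  constructor <;> nlinarith

lemma exists_φrDerivNumerator_eq_zero : ∃ y ∈ Set.Icc 853.41 853.43, φrDerivNumerator y = 0 := by
  have hcont : ContinuousOn φrDerivNumerator (Set.Icc 853.41 853.43) := by
    unfold φrDerivNumerator; fun_prop
  refine intermediate_value_Icc' (by norm_num) hcont ⟨?_, ?_⟩
  · have := exp_neg_βr_mul_853_43_mem_Icc.2
    simp only [φrDerivNumerator, βr, αr, c2] at *
    nlinarith
  · have := exp_neg_βr_mul_853_41_mem_Icc.1
    simp only [φrDerivNumerator, βr, αr, c2] at *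
    nlinarith

lemma inv_ba_mul_φr_mem_Icc {y : ℝ} (hy : y ∈ Set.Icc 853.41 853.43) :
    (ba * φr y)⁻¹ ∈ Set.Icc 0.4212 0.4214 := by
  obtain ⟨hφ₁, hφ₂⟩ := φr_mem_Icc hy
  obtain ⟨hba₁, hba₂⟩ := ba_mem_Icc
  constructor
  · rw [le_inv_comm₀ (by norm_num) (by positivity)]; nlinarith
  · rw [inv_le_comm₀ (by positivity) (by norm_num)]; nlinarith

lemma inv_φr_mem_Icc {y : ℝ} (hy : y ∈ Set.Icc 853.41 853.43) :
    (φr y)⁻¹ ∈ Set.Icc 12.27 12.29 := by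
  obtain ⟨hφ₁, hφ₂⟩ := φr_mem_Icc hy
  constructor
  · rw [le_inv_comm₀ (by norm_num) (by positivity)]; linarith
  · rw [inv_le_comm₀ (by positivity) (by norm_num)]; linarith

lemma Ωr_mul_div_sumPA_mem_Icc {y : ℝ} (hy : y ∈ Set.Icc 853.41 853.43) :
    Ωr * y / sumPA ∈ Set.Icc 569.4 569.6 := by
  obtain ⟨hs₁, hs₂⟩ := sumPA_mem_Icc
  obtain ⟨hy₁, hy₂⟩ := hy
  rw [Ωr, Set.mem_Icc, le_div_iff₀ (by positivity), div_le_iff₀ (by positivity)]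
  constructor <;> nlinarith

def births : (Fin 13 → ℝ) →L[ℝ] ℝ := ∑ j : Fin 13, br (j.val + 1) • ContinuousLinearMap.proj j

lemma births_apply (x : Fin 13 → ℝ) : births x = ∑ j : Fin 13, br (j.val + 1) * x j := by
  simp [births]

lemma births_avec : births avec = ba := by
  simp only [births_apply, avec, ba, mul_comm]

def leslie (r : ℝ) : (Fin 13 → ℝ) →L[ℝ] (Fin 13 → ℝ) :=
  ContinuousLinearMap.pi fun i =>
    if i.val = 0 then r • births
    else Sr i.val • ContinuousLinearMap.proj ⟨i.val - 1, by have := i.isLt; omega⟩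

lemma leslie_apply (r : ℝ) (x : Fin 13 → ℝ) (i : Fin 13) :
    leslie r x i = if i.val = 0 then r * births x
      else Sr i.val * x ⟨i.val - 1, by have := i.isLt; omega⟩ := by
  rw [leslie, ContinuousLinearMap.pi_apply]
  split_ifs <;> simp

lemma fc_eq_leslie (lam : ℝ) (x : Fin 13 → ℝ) : fc lam x = leslie (lam * φr (Pd x)) x := by
  funext i
  rw [leslie_apply, births_apply]
  unfold fc
  split_ifs <;> ring

lemma leslie_smul_avec {r : ℝ} (hr : r * ba = 1) (u : ℝ) : leslie r (u • avec) = u • avec := by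
  funext i
  rw [leslie_apply, map_smul, births_avec]
  split_ifs with hi
  · simp only [smul_eq_mul, Pi.smul_apply, avec, hi, ar_zero, mul_one]
    linear_combination u * hr
  · obtain ⟨k, hk⟩ := Nat.exists_eq_add_one_of_ne_zero hi
    simp only [hk, add_tsub_cancel_right, Pi.smul_apply, avec, smul_eq_mul, ar_succ]
    ring

lemma hasFDerivAt_fc_of_hasDerivAt_zero {lam : ℝ} {x : Fin 13 → ℝ}
    (hφ : HasDerivAt φr 0 (Pd x)) : HasFDerivAt (fc lam) (leslie (lam * φr (Pd x))) x := by
  have hPd : DifferentiableAt ℝ Pd x := by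
    unfold Pd
    refine (DifferentiableAt.fun_sum fun i _ => ?_).const_mul _
    split_ifs <;> fun_prop
  have hcoef : HasFDerivAt (fun y => lam * φr (Pd y)) (0 : (Fin 13 → ℝ) →L[ℝ] ℝ) x := by
    simpa using (hφ.comp_hasFDerivAt x hPd.hasFDerivAt).const_mul lam
  rw [show fc lam = fun y => leslie (lam * φr (Pd y)) y from funext (fc_eq_leslie lam)]
  refine hasFDerivAt_pi'.2 fun i => ?_
  by_cases hi : i.val = 0
  · simp only [leslie_apply, hi, if_true]
    refine (hcoef.fun_mul births.hasFDerivAt).congr_fderiv ?_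
    ext v
    simp [leslie_apply, hi]
  · have hlin :
        (fun y => leslie (lam * φr (Pd y)) y i) = fun y => leslie (lam * φr (Pd x)) y i := by
      funext y
      simp only [leslie_apply, hi, if_false]
    rw [hlin]
    exact ((ContinuousLinearMap.proj i).comp (leslie (lam * φr (Pd x)))).hasFDerivAt

lemma Pd_smul_avec (u : ℝ) : Pd (u • avec) = u * sumPA / Ωr := by
  simp only [Pd, sumPA, avec, Pi.smul_apply, smul_eq_mul, Finset.mul_sum, Finset.sum_div]
  refine Finset.sum_congr rfl fun i _ => ?_
  split_ifs <;> ring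

lemma sqrt_sum_sq_inv_smul {ι : Type*} [Fintype ι] {w : ι → ℝ} (hw : w ≠ 0) :
    √(∑ i, ((√(∑ j, w j ^ 2))⁻¹ • w) i ^ 2) = 1 := by
  have hpos : 0 < ∑ j, w j ^ 2 := by
    obtain ⟨i, hi⟩ := Function.ne_iff.1 hw
    exact Finset.sum_pos' (fun j _ => sq_nonneg (w j))
      ⟨i, Finset.mem_univ i, pow_two_pos_of_ne_zero hi⟩
  simp only [Pi.smul_apply, smul_eq_mul, mul_pow, ← Finset.mul_sum, inv_pow,
    Real.sq_sqrt hpos.le, inv_mul_cancel₀ hpos.ne', Real.sqrt_one]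

lemma avec_ne_zero : avec ≠ 0 := fun h => by simpa [avec, ar_zero] using congr_fun h 0

/-- validated saddle-node point, existence part: there are a
parameter `λ₀ ∈ [0.4212, 0.4214]` (equivalently `R₀ = (b·a)λ₀ ∈ [12.27, 12.29]`),
a fixed point `x₀` of `f(λ₀,·)` with first component in `[569.4, 569.6]` and
polyp density in `[853.3, 853.5]`, and a Euclidean unit vector `v ∈ ℝ¹³` with
`D_x f(λ₀,x₀) v = v`, i.e. `1` is an eigenvalue of the Jacobian at this
nontrivial fixed point. -/
theorem red_coral_saddle_node :
    ∃ (lam : ℝ) (x₀ v : Fin 13 → ℝ),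
      0.4212 ≤ lam ∧ lam ≤ 0.4214 ∧
      12.27 ≤ ba * lam ∧ ba * lam ≤ 12.29 ∧
      fc lam x₀ = x₀ ∧
      569.4 ≤ x₀ 0 ∧ x₀ 0 ≤ 569.6 ∧
      853.3 ≤ Pd x₀ ∧ Pd x₀ ≤ 853.5 ∧
      Real.sqrt (∑ i : Fin 13, v i ^ 2) = 1 ∧
      fderiv ℝ (fc lam) x₀ v = v := by
  obtain ⟨y, hy, hcrit⟩ := exists_φrDerivNumerator_eq_zero
  have hφ_pos : 0 < φr y := by linarith [(φr_mem_Icc hy).1]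
  have hba_pos : 0 < ba := by linarith [ba_mem_Icc.1]
  have hs_pos : 0 < sumPA := by linarith [sumPA_mem_Icc.1]
  set x₀ := (Ωr * y / sumPA) • avec
  have hPd : Pd x₀ = y := by rw [Pd_smul_avec]; field_simp [Ωr]
  have hr : (ba * φr y)⁻¹ * φr (Pd x₀) * ba = 1 := by rw [hPd]; field_simp
  have hR₀ : ba * (ba * φr y)⁻¹ = (φr y)⁻¹ := by field_simp
  have hx₀ : x₀ 0 = Ωr * y / sumPA := by simp [x₀, avec, ar_zero]
  have hφ : HasDerivAt φr 0 (Pd x₀) := by simpa [hPd, hcrit] using hasDerivAt_φr y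
  obtain ⟨hlam₁, hlam₂⟩ := inv_ba_mul_φr_mem_Icc hy
  obtain ⟨hR₁, hR₂⟩ := inv_φr_mem_Icc hy
  obtain ⟨ht₁, ht₂⟩ := Ωr_mul_div_sumPA_mem_Icc hy
  refine ⟨(ba * φr y)⁻¹, x₀, (√(∑ j, avec j ^ 2))⁻¹ • avec, hlam₁, hlam₂, hR₀ ▸ hR₁, hR₀ ▸ hR₂, ?_,
    hx₀ ▸ ht₁, hx₀ ▸ ht₂, hPd ▸ by linarith [hy.1], hPd ▸ by linarith [hy.2],
    sqrt_sum_sq_inv_smul avec_ne_zero, ?_⟩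
  · rw [fc_eq_leslie]
    exact leslie_smul_avec hr _
  · rw [(hasFDerivAt_fc_of_hasDerivAt_zero hφ).fderiv]
    exact leslie_smul_avec hr _

end RedCoral
end
end
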